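/- arXiv:2009.06792 — 3 statements merged into one kernel-verified Lean document; each statement's English description precedes it below -/
import Mathlib

section
/- Let k, t, n, s be integers with 2 ≤ t ≤ k−1 and 2 ≤ s ≤ n−3, and let V be a vector space over a field 𝔽 which is either infinite or finite of order q with q + 1 ≥ s, with dim V ≥ k + (n−1)(t−1) + 1. Then there exists a (k; k−t, k−t+1)-SPID S in V of Class III, namely: there exist linearly independent subspaces V', ⟨X1, X2⟩, M_3, …, M_n of V with dim V' = k−t+2, dim X1 = t, dim X2 = t−1, dim(X1 ∩ X2) = 1, dim M_i = t−1, a (k−t)-dimensional subspace W ≤ V', distinct (k−t+1)-dimensional subspaces W_0, W_1, …, W_s ≤ V' with W ≤ W_h for 1 ≤ h ≤ s and W not contained in W_0, and a partition of {3, …, n} into nonempty classes J_1, …, J_s, such that S = {⟨W, X1⟩, ⟨W_0, X2⟩} ∪ {⟨W_h, M_j⟩ : j ∈ J_h, 1 ≤ h ≤ s}. Such an S is not a (k−t)-junta and satisfies dim⟨S⟩ = k + (n−1)(t−1) + 1. -/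
open Module

variable {F : Type*} [Field F] {V : Type*} [AddCommGroup V] [Module F V]
  [FiniteDimensional F V]

/-- The subspace `⟨π_1, …, π_j⟩` (1-based), i.e. the span of the `π i` with `(i : ℕ) < j`. -/
def pspan {n : ℕ} (π : Fin n → Submodule F V) (j : ℕ) : Submodule F V :=
  ⨆ i : Fin n, ⨆ _ : (i : ℕ) < j, π i

/-- The 1-based difference sequence `δ_j = dim⟨π_1,…,π_j⟩ - dim⟨π_1,…,π_{j-1}⟩`. -/
noncomputable def delta {n : ℕ} (π : Fin n → Submodule F V) (j : ℕ) : ℕ :=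
  finrank F ↥(pspan π j) - finrank F ↥(pspan π (j - 1))

/-- A `(k; ℓ_1, …, ℓ_v)`-SPID, where `L` is the set of prescribed intersection dimensions:
a family of pairwise distinct `k`-dimensional subspaces, any two distinct members meeting
in a dimension belonging to `L`, and every value of `L` being attained. -/
def IsSPID {n : ℕ} (k : ℕ) (L : Set ℕ) (π : Fin n → Submodule F V) : Prop :=
  Function.Injective π ∧
  (∀ i, finrank F ↥(π i) = k) ∧
  (∀ i j, i ≠ j → finrank F ↥(π i ⊓ π j) ∈ L) ∧
  ∀ ℓ ∈ L, ∃ i j, i ≠ j ∧ finrank F ↥(π i ⊓ π j) = ℓ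

/-- An `ℓ`-junta: all members pass through a common `ℓ`-dimensional subspace. -/
def IsJunta {n : ℕ} (ℓ : ℕ) (π : Fin n → Submodule F V) : Prop :=
  ∃ C : Submodule F V, finrank F ↥C = ℓ ∧ ∀ i, C ≤ π i

/-- `S` contains an `ℓ`-sunflower of maximal dimension with `p` petals (all petals being
`k`-dimensional): `p` members of `S` pairwise meeting exactly in a common `ℓ`-dimensional
center and spanning a subspace of dimension `ℓ + p(k - ℓ)`. -/
def HasMaxSunflower (k ℓ p : ℕ) (S : Set (Submodule F V)) : Prop :=
  ∃ A : Finset (Submodule F V), ↑A ⊆ S ∧ A.card = p ∧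
    ∃ C : Submodule F V, finrank F ↥C = ℓ ∧
      (∀ W ∈ A, ∀ W' ∈ A, W ≠ W' → W ⊓ W' = C) ∧
      finrank F ↥(A.sup id) = ℓ + p * (k - ℓ)

/-- Class III configurations, with `s` the number of classes of the partition
(the partition of the last `n-2` members being encoded by the fibers of the surjection
`c`). -/
def IsClassIII (k t n s : ℕ) (S : Set (Submodule F V)) : Prop :=
  ∃ (V' X1 X2 W W0 : Submodule F V) (Wf : Fin s → Submodule F V)
    (M : Fin (n - 2) → Submodule F V) (c : Fin (n - 2) → Fin s),
    finrank F ↥V' = k - t + 2 ∧ finrank F ↥X1 = t ∧ finrank F ↥X2 = t - 1 ∧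
    finrank F ↥(X1 ⊓ X2) = 1 ∧ (∀ j, finrank F ↥(M j) = t - 1) ∧
    finrank F ↥(V' ⊔ (X1 ⊔ X2) ⊔ ⨆ j, M j) =
      (k - t + 2) + (2 * t - 2) + (n - 2) * (t - 1) ∧
    W ≤ V' ∧ finrank F ↥W = k - t ∧
    W0 ≤ V' ∧ finrank F ↥W0 = k - t + 1 ∧
    (∀ h, Wf h ≤ V' ∧ finrank F ↥(Wf h) = k - t + 1) ∧
    Function.Injective Wf ∧ (∀ h, W0 ≠ Wf h) ∧
    (∀ h, W ≤ Wf h) ∧ ¬ W ≤ W0 ∧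
    Function.Surjective c ∧
    S = {W ⊔ X1, W0 ⊔ X2} ∪ Set.range fun j => Wf (c j) ⊔ M j

set_option linter.unusedSectionVars false



section AuxSPID
variable {F : Type*} [Field F] {V : Type*} [AddCommGroup V] [Module F V]
  [FiniteDimensional F V]

lemma auxFactor {A A' B B' U U' : Submodule F V} (hA : A ≤ U) (hA' : A' ≤ U)
    (hB : B ≤ U') (hB' : B' ≤ U') (h : Disjoint U U') :
    (A ⊔ B) ⊓ (A' ⊔ B') = (A ⊓ A') ⊔ (B ⊓ B') := by
  refine le_antisymm ?_ (sup_le (le_inf (inf_le_left.trans le_sup_left)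
    (inf_le_right.trans le_sup_left)) (le_inf (inf_le_left.trans le_sup_right)
    (inf_le_right.trans le_sup_right)))
  intro x hx
  obtain ⟨hx1, hx2⟩ := Submodule.mem_inf.mp hx
  obtain ⟨a, ha, bv, hbv, rfl⟩ := Submodule.mem_sup.mp hx1
  obtain ⟨a', ha', b', hb', heq⟩ := Submodule.mem_sup.mp hx2
  have h1 : a - a' = b' - bv := by
    rw [sub_eq_sub_iff_add_eq_add, ← heq]; exact add_comm _ _
  have hz : a - a' = 0 := Submodule.disjoint_def.mp h _ (sub_mem (hA ha) (hA' ha'))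
    (by rw [h1]; exact sub_mem (hB' hb') (hB hbv))
  have ha2 : a = a' := sub_eq_zero.mp hz
  have hb2 : bv = b' := by
    have hz2 : b' - bv = 0 := by rw [← h1]; exact hz
    exact (sub_eq_zero.mp hz2).symm
  exact Submodule.mem_sup.mpr ⟨a, Submodule.mem_inf.mpr ⟨ha, by rw [ha2]; exact ha'⟩,
    bv, Submodule.mem_inf.mpr ⟨hbv, by rw [hb2]; exact hb'⟩, rfl⟩

lemma auxFinrankSup {A B : Submodule F V} (h : Disjoint A B) :
    finrank F ↥(A ⊔ B) = finrank F ↥A + finrank F ↥B := by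
  have h2 := Submodule.finrank_sup_add_finrank_inf_eq A B
  rw [disjoint_iff.mp h, finrank_bot] at h2
  omega

lemma auxSpanDisjoint {ι J J' : Type*} {b : ι → V} (hb : LinearIndependent F b)
    (g : J → ι) (g' : J' → ι) (h : ∀ x y, g x ≠ g' y) :
    Disjoint (Submodule.span F (Set.range (b ∘ g))) (Submodule.span F (Set.range (b ∘ g'))) := by
  rw [Set.range_comp, Set.range_comp]
  refine hb.disjoint_span_image (Set.disjoint_left.mpr ?_)
  rintro a ⟨x, rfl⟩ ⟨y, hy⟩
  exact h x y hy.symm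

lemma auxSpanFinrank {ι J : Type*} [Fintype J] {b : ι → V} (hb : LinearIndependent F b)
    {g : J → ι} (hg : Function.Injective g) :
    finrank F ↥(Submodule.span F (Set.range (b ∘ g))) = Fintype.card J :=
  finrank_span_eq_card (hb.comp g hg)

lemma auxSpanLe {ι J J' : Type*} (b : ι → V) {g : J → ι} {g' : J' → ι}
    (h : ∀ x, ∃ y, g' y = g x) :
    Submodule.span F (Set.range (b ∘ g)) ≤ Submodule.span F (Set.range (b ∘ g')) := by
  apply Submodule.span_mono
  rintro _ ⟨x, rfl⟩
  obtain ⟨y, hy⟩ := h x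
  exact ⟨y, by simp [hy]⟩
end AuxSPID

section Abstract
variable {F : Type*} [Field F] {V : Type*} [AddCommGroup V] [Module F V]
  [FiniteDimensional F V]

set_option maxHeartbeats 1000000 in
lemma classIII_abstract {n k t s : ℕ} (ht2 : 2 ≤ t) (htk : t + 1 ≤ k)
    (hs1 : 2 ≤ s) (hsn : s + 3 ≤ n)
    (W W' E X1 X2 L0 Vp Vrest : Submodule F V)
    (Lf : Fin s → Submodule F V) (Mm : Fin (n - 2) → Submodule F V)
    (hW'W : W' ≤ W) (hWVp : W ≤ Vp) (hEVp : E ≤ Vp) (hVpWE : Vp ≤ W ⊔ E)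
    (hLfE : ∀ h, Lf h ≤ E)
    (hX1R : X1 ≤ Vrest) (hX2R : X2 ≤ Vrest) (hL0R : L0 ≤ Vrest)
    (hMR : ∀ j, Mm j ≤ Vrest)
    (frW : finrank F ↥W = k - t) (frW' : finrank F ↥W' = k - t - 1)
    (frE : finrank F ↥E = 2) (frX1 : finrank F ↥X1 = t) (frX2 : finrank F ↥X2 = t - 1)
    (frL0 : finrank F ↥L0 = 1) (frLf : ∀ h, finrank F ↥(Lf h) = 1)
    (frM : ∀ j, finrank F ↥(Mm j) = t - 1)
    (dWE : Disjoint W E) (dVpR : Disjoint Vp Vrest)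
    (hX1X2 : X1 ⊓ X2 = L0)
    (dLf : ∀ h h', h ≠ h' → Lf h ⊓ Lf h' = ⊥)
    (dX1M : ∀ j, X1 ⊓ Mm j = ⊥) (dX2M : ∀ j, X2 ⊓ Mm j = ⊥)
    (dMM : ∀ j j', j ≠ j' → Mm j ⊓ Mm j' = ⊥)
    (frTot : finrank F ↥(Vp ⊔ (X1 ⊔ X2) ⊔ ⨆ j, Mm j) = k + (n - 1) * (t - 1) + 1) :
    ∃ π : Fin n → Submodule F V,
      IsSPID k {k - t, k - t + 1} π ∧ IsClassIII k t n s (Set.range π) ∧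
      ¬ IsJunta (k - t) π ∧
      finrank F ↥(⨆ i, π i) = k + (n - 1) * (t - 1) + 1 := by
  classical
  -- derived disjointness
  have dW'E : Disjoint W' E := dWE.mono_left hW'W
  have dWLf : ∀ h, Disjoint W (Lf h) := fun h => dWE.mono_right (hLfE h)
  have dW'Lf : ∀ h, Disjoint W' (Lf h) := fun h => (dWLf h).mono_left hW'W
  have dW'L0 : Disjoint W' L0 := dVpR.mono (hW'W.trans hWVp) hL0R
  have dWX1 : Disjoint W X1 := dVpR.mono hWVp hX1R
  have hW0Vp : W' ⊔ E ≤ Vp := sup_le (hW'W.trans hWVp) hEVp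
  have hWfVp : ∀ h, W ⊔ Lf h ≤ Vp := fun h => sup_le hWVp ((hLfE h).trans hEVp)
  have dW0X2 : Disjoint (W' ⊔ E) X2 := dVpR.mono hW0Vp hX2R
  have dWfM : ∀ h j, Disjoint (W ⊔ Lf h) (Mm j) := fun h j => dVpR.mono (hWfVp h) (hMR j)
  -- finranks
  have frW0 : finrank F ↥(W' ⊔ E) = k - t + 1 := by
    rw [auxFinrankSup dW'E, frW', frE]; omega
  have frWf : ∀ h, finrank F ↥(W ⊔ Lf h) = k - t + 1 := fun h => by
    rw [auxFinrankSup (dWLf h), frW, frLf]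
  have frπ0 : finrank F ↥(W ⊔ X1) = k := by
    rw [auxFinrankSup dWX1, frW, frX1]; omega
  have frπ1 : finrank F ↥((W' ⊔ E) ⊔ X2) = k := by
    rw [auxFinrankSup dW0X2, frW0, frX2]; omega
  have frπj : ∀ h j, finrank F ↥((W ⊔ Lf h) ⊔ Mm j) = k := fun h j => by
    rw [auxFinrankSup (dWfM h j), frWf, frM]; omega
  -- intersections
  have iWW0 : W ⊓ (W' ⊔ E) = W' := by
    have h := auxFactor (le_refl W) hW'W (bot_le : (⊥ : Submodule F V) ≤ E) (le_refl E) dWE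
    rw [sup_bot_eq] at h
    rw [h, inf_eq_right.mpr hW'W, bot_inf_eq, sup_bot_eq]
  have iWWf : ∀ h, W ⊓ (W ⊔ Lf h) = W := fun h => inf_eq_left.mpr le_sup_left
  have iWfWf : ∀ h h', h ≠ h' → (W ⊔ Lf h) ⊓ (W ⊔ Lf h') = W := by
    intro h h' hne
    rw [auxFactor (le_refl W) (le_refl W) (hLfE h) (hLfE h') dWE, inf_idem, dLf h h' hne,
      sup_bot_eq]
  have iW0Wf : ∀ h, (W' ⊔ E) ⊓ (W ⊔ Lf h) = W' ⊔ Lf h := by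
    intro h
    rw [auxFactor hW'W (le_refl W) (le_refl E) (hLfE h) dWE, inf_eq_left.mpr hW'W,
      inf_eq_right.mpr (hLfE h)]
  have frW'Lf : ∀ h, finrank F ↥(W' ⊔ Lf h) = k - t := fun h => by
    rw [auxFinrankSup (dW'Lf h), frW', frLf]; omega
  have frW'L0 : finrank F ↥(W' ⊔ L0) = k - t := by
    rw [auxFinrankSup dW'L0, frW', frL0]; omega
  have iπ01 : (W ⊔ X1) ⊓ ((W' ⊔ E) ⊔ X2) = W' ⊔ L0 := by
    rw [auxFactor hWVp hW0Vp hX1R hX2R dVpR, iWW0, hX1X2]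
  have iπ0j : ∀ h j, (W ⊔ X1) ⊓ ((W ⊔ Lf h) ⊔ Mm j) = W := by
    intro h j
    rw [auxFactor hWVp (hWfVp h) hX1R (hMR j) dVpR, iWWf, dX1M, sup_bot_eq]
  have iπ1j : ∀ h j, ((W' ⊔ E) ⊔ X2) ⊓ ((W ⊔ Lf h) ⊔ Mm j) = W' ⊔ Lf h := by
    intro h j
    rw [auxFactor hW0Vp (hWfVp h) hX2R (hMR j) dVpR, iW0Wf, dX2M, sup_bot_eq]
  have iπjj : ∀ h h' j j', ((W ⊔ Lf h) ⊔ Mm j) ⊓ ((W ⊔ Lf h') ⊔ Mm j') =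
      ((W ⊔ Lf h) ⊓ (W ⊔ Lf h')) ⊔ (Mm j ⊓ Mm j') := fun h h' j j' =>
    auxFactor (hWfVp h) (hWfVp h') (hMR j) (hMR j') dVpR
  -- the coloring
  obtain ⟨c, hcsurj, hc0⟩ : ∃ c : Fin (n - 2) → Fin s, Function.Surjective c ∧
      ∀ j : Fin (n - 2), (j : ℕ) = 0 ∨ (j : ℕ) = s → c j = ⟨0, by omega⟩ := by
    refine ⟨fun j => if hj : (j : ℕ) < s then ⟨j, hj⟩ else ⟨0, by omega⟩, ?_, ?_⟩
    · intro h
      refine ⟨⟨(h : ℕ), by omega⟩, ?_⟩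
      dsimp only
      rw [dif_pos h.isLt]
    · intro j hj
      dsimp only
      rcases hj with hj | hj
      · rw [dif_pos (by omega)]
        simp only [Fin.mk.injEq]
        omega
      · rw [dif_neg (by omega)]
  -- the family
  obtain ⟨π, hπ0, hπ1, hπ2⟩ : ∃ π : Fin n → Submodule F V,
      (∀ i : Fin n, (i : ℕ) = 0 → π i = W ⊔ X1) ∧
      (∀ i : Fin n, (i : ℕ) = 1 → π i = (W' ⊔ E) ⊔ X2) ∧
      (∀ (i : Fin n) (j : Fin (n - 2)), (i : ℕ) = (j : ℕ) + 2 →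
        π i = (W ⊔ Lf (c j)) ⊔ Mm j) := by
    refine ⟨fun i => if h0 : (i : ℕ) = 0 then W ⊔ X1 else
      if h1 : (i : ℕ) = 1 then (W' ⊔ E) ⊔ X2
      else (W ⊔ Lf (c ⟨(i : ℕ) - 2, by have := i.isLt; omega⟩)) ⊔
        Mm ⟨(i : ℕ) - 2, by have := i.isLt; omega⟩, ?_, ?_, ?_⟩
    · intro i hi; dsimp only; rw [dif_pos hi]
    · intro i hi; dsimp only; rw [dif_neg (by omega), dif_pos hi]
    · intro i j hij
      dsimp only
      rw [dif_neg (by omega), dif_neg (by omega)]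
      have hj2 : (⟨(i : ℕ) - 2, by have := i.isLt; omega⟩ : Fin (n - 2)) = j :=
        Fin.ext (by simp; omega)
      rw [hj2]
  have htot : ∀ i : Fin n, (i : ℕ) = 0 ∨ (i : ℕ) = 1 ∨
      ∃ j : Fin (n - 2), (i : ℕ) = (j : ℕ) + 2 := by
    intro i
    rcases Nat.lt_or_ge (i : ℕ) 1 with h | h
    · exact Or.inl (by omega)
    rcases Nat.lt_or_ge (i : ℕ) 2 with h2 | h2
    · exact Or.inr (Or.inl (by omega))
    refine Or.inr (Or.inr ⟨⟨(i : ℕ) - 2, by have := i.isLt; omega⟩, ?_⟩)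
    show (i : ℕ) = (i : ℕ) - 2 + 2
    omega
  have frπ : ∀ i, finrank F ↥(π i) = k := by
    intro i
    rcases htot i with h | h | ⟨j, h⟩
    · rw [hπ0 i h]; exact frπ0
    · rw [hπ1 i h]; exact frπ1
    · rw [hπ2 i j h]; exact frπj _ _
  have h0n : 0 < n := by omega
  have h1n : 1 < n := by omega
  have h2n : 2 < n := by omega
  have hs2n : s + 2 < n := by omega
  have h0n2 : 0 < n - 2 := by omega
  have hsn2 : s < n - 2 := by omega
  have key : ∀ i i' : Fin n, i ≠ i' → finrank F ↥(π i ⊓ π i') = k - t ∨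
      finrank F ↥(π i ⊓ π i') = k - t + 1 := by
    intro i i' hne
    rcases htot i with h | h | ⟨j, h⟩ <;> rcases htot i' with h' | h' | ⟨j', h'⟩
    · exact absurd (Fin.ext (by omega)) hne
    · rw [hπ0 i h, hπ1 i' h', iπ01]; exact Or.inl frW'L0
    · rw [hπ0 i h, hπ2 i' j' h', iπ0j]; exact Or.inl frW
    · rw [hπ1 i h, hπ0 i' h', inf_comm, iπ01]; exact Or.inl frW'L0
    · exact absurd (Fin.ext (by omega)) hne
    · rw [hπ1 i h, hπ2 i' j' h', iπ1j]; exact Or.inl (frW'Lf _)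
    · rw [hπ2 i j h, hπ0 i' h', inf_comm, iπ0j]; exact Or.inl frW
    · rw [hπ2 i j h, hπ1 i' h', inf_comm, iπ1j]; exact Or.inl (frW'Lf _)
    · have hjj' : j ≠ j' := by rintro rfl; exact hne (Fin.ext (by omega))
      rw [hπ2 i j h, hπ2 i' j' h', iπjj, dMM j j' hjj', sup_bot_eq]
      by_cases hcc : c j = c j'
      · rw [hcc, inf_idem]; exact Or.inr (frWf _)
      · rw [iWfWf _ _ hcc]; exact Or.inl frW
  have hinj : Function.Injective π := by
    intro i i' hii
    by_contra hne
    have h2 := key i i' hne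
    rw [hii, inf_idem, frπ i'] at h2
    omega
  have hatt1 : finrank F ↥(π ⟨0, h0n⟩ ⊓ π ⟨1, h1n⟩) = k - t := by
    rw [hπ0 ⟨0, h0n⟩ rfl, hπ1 ⟨1, h1n⟩ rfl, iπ01]; exact frW'L0
  have hatt2 : finrank F ↥(π ⟨2, h2n⟩ ⊓ π ⟨s + 2, hs2n⟩) = k - t + 1 := by
    have e1 : π ⟨2, h2n⟩ = (W ⊔ Lf (c ⟨0, h0n2⟩)) ⊔ Mm ⟨0, h0n2⟩ :=
      hπ2 ⟨2, h2n⟩ ⟨0, h0n2⟩ rfl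
    have e2 : π ⟨s + 2, hs2n⟩ = (W ⊔ Lf (c ⟨s, hsn2⟩)) ⊔ Mm ⟨s, hsn2⟩ :=
      hπ2 ⟨s + 2, hs2n⟩ ⟨s, hsn2⟩ rfl
    rw [e1, e2, hc0 ⟨0, h0n2⟩ (Or.inl rfl), hc0 ⟨s, hsn2⟩ (Or.inr rfl), iπjj, inf_idem,
      dMM ⟨0, h0n2⟩ ⟨s, hsn2⟩ (by simp only [ne_eq, Fin.mk.injEq]; omega), sup_bot_eq]
    exact frWf _
  refine ⟨π, ⟨hinj, frπ, ?_, ?_⟩, ?_, ?_, ?_⟩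
  · intro i j hne
    rcases key i j hne with h | h <;> simp [h]
  · intro ℓ hℓ
    simp only [Set.mem_insert_iff, Set.mem_singleton_iff] at hℓ
    rcases hℓ with rfl | rfl
    · exact ⟨⟨0, h0n⟩, ⟨1, h1n⟩, by simp only [ne_eq, Fin.mk.injEq]; omega, hatt1⟩
    · exact ⟨⟨2, h2n⟩, ⟨s + 2, hs2n⟩, by simp only [ne_eq, Fin.mk.injEq]; omega, hatt2⟩
  · -- Class III
    refine ⟨Vp, X1, X2, W, W' ⊔ E, fun h => W ⊔ Lf h, Mm, c, ?_, frX1, frX2, ?_, frM, ?_,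
      hWVp, frW, hW0Vp, frW0, fun h => ⟨hWfVp h, frWf h⟩, ?_, ?_, fun h => le_sup_left,
      ?_, hcsurj, ?_⟩
    · have hVpeq : Vp = W ⊔ E := le_antisymm hVpWE (sup_le hWVp hEVp)
      rw [hVpeq, auxFinrankSup dWE, frW, frE]
    · rw [hX1X2]; exact frL0
    · rw [frTot]
      have hmul : (n - 1) * (t - 1) = (n - 2) * (t - 1) + (t - 1) := by
        have h' : n - 1 = (n - 2) + 1 := by omega
        rw [h', Nat.add_mul, one_mul]
      rw [hmul]
      generalize (n - 2) * (t - 1) = P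
      omega
    · intro a b hab
      dsimp only at hab
      by_contra hne
      have h4 := iWfWf a b hne
      rw [hab, inf_idem] at h4
      have h3 := frWf b
      rw [h4, frW] at h3
      omega
    · intro h heq
      dsimp only at heq
      have h4 := iW0Wf h
      rw [← heq, inf_idem] at h4
      have h3 := frW0
      rw [h4, frW'Lf] at h3
      omega
    · intro hle
      have h4 := inf_eq_left.mpr hle
      rw [iWW0] at h4
      have h3 := frW
      rw [← h4, frW'] at h3
      omega
    · ext x
      simp only [Set.mem_union, Set.mem_insert_iff, Set.mem_singleton_iff, Set.mem_range]
      constructor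
      · rintro ⟨i, rfl⟩
        rcases htot i with h | h | ⟨j, h⟩
        · exact Or.inl (Or.inl (hπ0 i h))
        · exact Or.inl (Or.inr (hπ1 i h))
        · exact Or.inr ⟨j, (hπ2 i j h).symm⟩
      · rintro ((rfl | rfl) | ⟨j, rfl⟩)
        · exact ⟨⟨0, h0n⟩, hπ0 ⟨0, h0n⟩ rfl⟩
        · exact ⟨⟨1, h1n⟩, hπ1 ⟨1, h1n⟩ rfl⟩
        · exact ⟨⟨(j : ℕ) + 2, by have := j.isLt; omega⟩,
            hπ2 ⟨(j : ℕ) + 2, by have := j.isLt; omega⟩ j rfl⟩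
  · -- not a junta
    rintro ⟨C, hC, hCle⟩
    have hC0 := hCle ⟨0, h0n⟩
    rw [hπ0 _ rfl] at hC0
    have hC1 := hCle ⟨1, h1n⟩
    rw [hπ1 _ rfl] at hC1
    have hC2 := hCle ⟨2, h2n⟩
    rw [hπ2 ⟨2, h2n⟩ ⟨0, h0n2⟩ rfl] at hC2
    have hCW : C ≤ W := by
      have h5 : C ≤ (W ⊔ X1) ⊓ ((W ⊔ Lf (c ⟨0, h0n2⟩)) ⊔ Mm ⟨0, h0n2⟩) :=
        le_inf hC0 hC2
      rwa [iπ0j] at h5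
    have hCW' : C ≤ W' := by
      have h5 : C ≤ W ⊓ ((W' ⊔ E) ⊔ X2) := le_inf hCW hC1
      have h6 := auxFactor hWVp hW0Vp (bot_le : (⊥ : Submodule F V) ≤ Vrest) hX2R dVpR
      rw [sup_bot_eq] at h6
      rw [h6, iWW0, bot_inf_eq, sup_bot_eq] at h5
      exact h5
    have h7 := Submodule.finrank_mono hCW'
    rw [hC, frW'] at h7
    omega
  · -- total dimension
    have hsupπ : (⨆ i, π i) = Vp ⊔ (X1 ⊔ X2) ⊔ ⨆ j, Mm j := by
      have hVpT : Vp ≤ Vp ⊔ (X1 ⊔ X2) ⊔ ⨆ j, Mm j := le_sup_of_le_left le_sup_left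
      have hX1T : X1 ≤ Vp ⊔ (X1 ⊔ X2) ⊔ ⨆ j, Mm j :=
        le_sup_of_le_left (le_sup_of_le_right le_sup_left)
      have hX2T : X2 ≤ Vp ⊔ (X1 ⊔ X2) ⊔ ⨆ j, Mm j :=
        le_sup_of_le_left (le_sup_of_le_right le_sup_right)
      have hMT : ∀ j, Mm j ≤ Vp ⊔ (X1 ⊔ X2) ⊔ ⨆ j, Mm j :=
        fun j => le_sup_of_le_right (le_iSup _ j)
      apply le_antisymm
      · apply iSup_le
        intro i
        rcases htot i with h | h | ⟨j, h⟩
        · rw [hπ0 i h]; exact sup_le (hWVp.trans hVpT) hX1T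
        · rw [hπ1 i h]
          exact sup_le (sup_le ((hW'W.trans hWVp).trans hVpT) (hEVp.trans hVpT)) hX2T
        · rw [hπ2 i j h]
          exact sup_le (sup_le (hWVp.trans hVpT)
            (((hLfE _).trans hEVp).trans hVpT)) (hMT j)
      · have hWπ : W ≤ ⨆ i, π i :=
          (le_sup_left : W ≤ W ⊔ X1).trans ((hπ0 ⟨0, h0n⟩ rfl).ge.trans
            (le_iSup π ⟨0, h0n⟩))
        have hX1π : X1 ≤ ⨆ i, π i :=
          (le_sup_right : X1 ≤ W ⊔ X1).trans ((hπ0 ⟨0, h0n⟩ rfl).ge.trans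
            (le_iSup π ⟨0, h0n⟩))
        have hEπ : E ≤ ⨆ i, π i :=
          ((le_sup_right.trans le_sup_left) : E ≤ (W' ⊔ E) ⊔ X2).trans
            ((hπ1 ⟨1, h1n⟩ rfl).ge.trans (le_iSup π ⟨1, h1n⟩))
        have hX2π : X2 ≤ ⨆ i, π i :=
          (le_sup_right : X2 ≤ (W' ⊔ E) ⊔ X2).trans ((hπ1 ⟨1, h1n⟩ rfl).ge.trans
            (le_iSup π ⟨1, h1n⟩))
        have hMπ : ∀ j : Fin (n - 2), Mm j ≤ ⨆ i, π i := fun j =>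
          (le_sup_right : Mm j ≤ (W ⊔ Lf (c j)) ⊔ Mm j).trans
            ((hπ2 ⟨(j : ℕ) + 2, by have := j.isLt; omega⟩ j rfl).ge.trans
              (le_iSup π ⟨(j : ℕ) + 2, by have := j.isLt; omega⟩))
        exact sup_le (sup_le (hVpWE.trans (sup_le hWπ hEπ)) (sup_le hX1π hX2π))
          (iSup_le hMπ)
    rw [hsupπ]
    exact frTot
end Abstract

abbrev SPIDIndex (m t2 t1 n2 : ℕ) : Type :=
  (Fin m ⊕ Fin 2) ⊕ ((Fin t1 ⊕ Fin t2) ⊕ Unit) ⊕ (Fin n2 × Fin t1)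

namespace SPIDIndex
variable {m t2 t1 n2 : ℕ}
def gW (i : Fin m) : SPIDIndex m t2 t1 n2 := Sum.inl (Sum.inl i)
def gE (i : Fin 2) : SPIDIndex m t2 t1 n2 := Sum.inl (Sum.inr i)
def gVp (x : Fin m ⊕ Fin 2) : SPIDIndex m t2 t1 n2 := Sum.inl x
def gW' (i : Fin (m - 1)) : SPIDIndex m t2 t1 n2 :=
  Sum.inl (Sum.inl (Fin.castLE (Nat.sub_le m 1) i))
def gA (i : Fin t1) : SPIDIndex m t2 t1 n2 := Sum.inr (Sum.inl (Sum.inl (Sum.inl i)))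
def gB (i : Fin t2) : SPIDIndex m t2 t1 n2 := Sum.inr (Sum.inl (Sum.inl (Sum.inr i)))
def gO (_ : Unit) : SPIDIndex m t2 t1 n2 := Sum.inr (Sum.inl (Sum.inr ()))
def gM (j : Fin n2) (i : Fin t1) : SPIDIndex m t2 t1 n2 := Sum.inr (Sum.inr (j, i))
def gAB (x : Fin t1 ⊕ Fin t2) : SPIDIndex m t2 t1 n2 := Sum.inr (Sum.inl (Sum.inl x))
def gX (x : (Fin t1 ⊕ Fin t2) ⊕ Unit) : SPIDIndex m t2 t1 n2 := Sum.inr (Sum.inl x)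
def gR (x : ((Fin t1 ⊕ Fin t2) ⊕ Unit) ⊕ (Fin n2 × Fin t1)) : SPIDIndex m t2 t1 n2 :=
  Sum.inr x
end SPIDIndex


set_option maxHeartbeats 1000000

/-- Existence of Class III examples over a sufficiently large (or infinite) field. -/
theorem statement14 {n k t s : ℕ} (ht2 : 2 ≤ t) (htk : t + 1 ≤ k)
    (hs1 : 2 ≤ s) (hs2 : s ≤ n - 3)
    (hF : Infinite F ∨ (Finite F ∧ s ≤ Nat.card F + 1))
    (hdimV : k + (n - 1) * (t - 1) + 1 ≤ finrank F V) :
    ∃ π : Fin n → Submodule F V,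
      IsSPID k {k - t, k - t + 1} π ∧ IsClassIII k t n s (Set.range π) ∧
      ¬ IsJunta (k - t) π ∧
      finrank F ↥(⨆ i, π i) = k + (n - 1) * (t - 1) + 1 := by
  classical
  have hsn : s + 3 ≤ n := by omega
  obtain ⟨g⟩ : Nonempty (Fin s ↪ Option F) := by
    rcases hF with h | ⟨hfin, hcard'⟩
    · exact ⟨Fin.valEmbedding.trans (Infinite.natEmbedding (Option F))⟩
    · haveI := Fintype.ofFinite F
      refine Function.Embedding.nonempty_of_card_le ?_
      rw [Fintype.card_fin, Fintype.card_option]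
      rwa [Nat.card_eq_fintype_card] at hcard'
  have hcard : Fintype.card (SPIDIndex (k - t) (t - 2) (t - 1) (n - 2)) =
      k + (n - 1) * (t - 1) + 1 := by
    have hmul : (n - 1) * (t - 1) = (n - 2) * (t - 1) + (t - 1) := by
      have h' : n - 1 = (n - 2) + 1 := by omega
      rw [h', Nat.add_mul, one_mul]
    simp only [SPIDIndex, Fintype.card_sum, Fintype.card_prod, Fintype.card_fin,
      Fintype.card_unit]
    rw [hmul]
    generalize (n - 2) * (t - 1) = P
    omega
  obtain ⟨f, hf⟩ := exists_linearIndependent_of_le_finrank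
    (show Fintype.card (SPIDIndex (k - t) (t - 2) (t - 1) (n - 2)) ≤ finrank F V by
      rw [hcard]; exact hdimV)
  obtain ⟨b, hb⟩ : ∃ b : SPIDIndex (k - t) (t - 2) (t - 1) (n - 2) → V,
      LinearIndependent F b :=
    ⟨f ∘ (Fintype.equivFin _), hf.comp _ (Equiv.injective _)⟩
  obtain ⟨u, hun, hus⟩ : ∃ u : Option F → V, u none = b (SPIDIndex.gE 1) ∧
      ∀ a : F, u (some a) = b (SPIDIndex.gE 0) + a • b (SPIDIndex.gE 1) :=
    ⟨fun c => c.elim (b (SPIDIndex.gE 1))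
      (fun a => b (SPIDIndex.gE 0) + a • b (SPIDIndex.gE 1)), rfl, fun _ => rfl⟩
  have hE2 : LinearIndependent F (b ∘ (SPIDIndex.gE : Fin 2 → _)) :=
    hb.comp _ (fun a a' h => by simpa [SPIDIndex.gE] using h)
  have hkey : ∀ r w : F, r • b (SPIDIndex.gE 0) + w • b (SPIDIndex.gE 1) = 0 →
      r = 0 ∧ w = 0 := by
    intro r w hrw
    have h2 := Fintype.linearIndependent_iff.mp hE2 ![r, w]
      (by rw [Fin.sum_univ_two]; simpa using hrw)
    exact ⟨h2 0, h2 1⟩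
  have hune : ∀ cc : Option F, u cc ≠ 0 := by
    intro cc h0
    rcases cc with _ | a
    · rw [hun] at h0
      have h1 := (hkey 0 1 (by rw [h0]; simp)).2
      exact one_ne_zero h1
    · rw [hus] at h0
      have h1 := (hkey 1 a (by rw [one_smul]; exact h0)).1
      exact one_ne_zero h1
  have hLinf : ∀ c1 c2 : Option F, c1 ≠ c2 →
      Submodule.span F {u c1} ⊓ Submodule.span F {u c2} = ⊥ := by
    intro c1 c2 hcc
    rw [eq_bot_iff]
    intro v hv
    obtain ⟨hv1, hv2⟩ := Submodule.mem_inf.mp hv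
    obtain ⟨r, rfl⟩ := Submodule.mem_span_singleton.mp hv1
    obtain ⟨r', hr'⟩ := Submodule.mem_span_singleton.mp hv2
    rw [Submodule.mem_bot]
    rcases c1 with _ | a1 <;> rcases c2 with _ | a2
    · exact absurd rfl hcc
    · rw [hun]
      rw [hun, hus a2] at hr'
      have h0 : r' • b (SPIDIndex.gE 0) + (r' * a2 - r) • b (SPIDIndex.gE 1) = 0 := by
        linear_combination (norm := module) hr'
      obtain ⟨h1, h2⟩ := hkey _ _ h0
      have hr0 : r = 0 := by linear_combination a2 * h1 - h2
      rw [hr0, zero_smul]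
    · rw [hus a1]
      rw [hun, hus a1] at hr'
      have h0 : r • b (SPIDIndex.gE 0) + (r * a1 - r') • b (SPIDIndex.gE 1) = 0 := by
        linear_combination (norm := module) -hr'
      obtain ⟨h1, h2⟩ := hkey _ _ h0
      rw [h1, zero_smul]
    · rw [hus a1]
      rw [hus a1, hus a2] at hr'
      have haa : a1 ≠ a2 := fun hc => hcc (by rw [hc])
      have h0 : (r' - r) • b (SPIDIndex.gE 0) +
          (r' * a2 - r * a1) • b (SPIDIndex.gE 1) = 0 := by
        linear_combination (norm := module) hr'
      obtain ⟨h1, h2⟩ := hkey _ _ h0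
      have hr0 : r = 0 := by
        have h3 : r * (a2 - a1) = 0 := by linear_combination h2 - a2 * h1
        rcases mul_eq_zero.mp h3 with h4 | h4
        · exact h4
        · exact absurd (sub_eq_zero.mp h4).symm haa
      rw [hr0, zero_smul]
  refine classIII_abstract ht2 htk hs1 hsn
    (Submodule.span F (Set.range (b ∘ SPIDIndex.gW)))
    (Submodule.span F (Set.range (b ∘ SPIDIndex.gW')))
    (Submodule.span F (Set.range (b ∘ SPIDIndex.gE)))
    (Submodule.span F (Set.range (b ∘ SPIDIndex.gA)) ⊔
      Submodule.span F (Set.range (b ∘ SPIDIndex.gO)))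
    (Submodule.span F (Set.range (b ∘ SPIDIndex.gB)) ⊔
      Submodule.span F (Set.range (b ∘ SPIDIndex.gO)))
    (Submodule.span F (Set.range (b ∘ SPIDIndex.gO)))
    (Submodule.span F (Set.range (b ∘ SPIDIndex.gVp)))
    (Submodule.span F (Set.range (b ∘ SPIDIndex.gR)))
    (fun h => Submodule.span F {u (g h)})
    (fun j => Submodule.span F (Set.range (b ∘ SPIDIndex.gM j)))
    ?_ ?_ ?_ ?_ ?_ ?_ ?_ ?_ ?_ ?_ ?_ ?_ ?_ ?_ ?_ ?_ ?_ ?_ ?_ ?_ ?_ ?_ ?_ ?_ ?_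
  · -- W' ≤ W
    exact auxSpanLe b (fun x => ⟨Fin.castLE (Nat.sub_le _ 1) x, rfl⟩)
  · -- W ≤ Vp
    exact auxSpanLe b (fun x => ⟨Sum.inl x, rfl⟩)
  · -- E ≤ Vp
    exact auxSpanLe b (fun x => ⟨Sum.inr x, rfl⟩)
  · -- Vp ≤ W ⊔ E
    apply Submodule.span_le.mpr
    rintro v ⟨x, rfl⟩
    rcases x with i | i
    · exact Submodule.mem_sup_left (Submodule.subset_span ⟨i, rfl⟩)
    · exact Submodule.mem_sup_right (Submodule.subset_span ⟨i, rfl⟩)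
  · -- Lf h ≤ E
    intro h
    apply (Submodule.span_singleton_le_iff_mem _ _).mpr
    rcases g h with _ | a
    · rw [hun]; exact Submodule.subset_span ⟨1, rfl⟩
    · rw [hus]
      exact add_mem (Submodule.subset_span ⟨0, rfl⟩)
        (Submodule.smul_mem _ _ (Submodule.subset_span ⟨1, rfl⟩))
  · -- X1 ≤ Vrest
    exact sup_le (auxSpanLe b (fun x => ⟨Sum.inl (Sum.inl (Sum.inl x)), rfl⟩))
      (auxSpanLe b (fun x => ⟨Sum.inl (Sum.inr ()), rfl⟩))
  · -- X2 ≤ Vrest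
    exact sup_le (auxSpanLe b (fun x => ⟨Sum.inl (Sum.inl (Sum.inr x)), rfl⟩))
      (auxSpanLe b (fun x => ⟨Sum.inl (Sum.inr ()), rfl⟩))
  · -- L0 ≤ Vrest
    exact auxSpanLe b (fun x => ⟨Sum.inl (Sum.inr ()), rfl⟩)
  · -- Mm j ≤ Vrest
    exact fun j => auxSpanLe b (fun x => ⟨Sum.inr (j, x), rfl⟩)
  · -- frW
    exact (auxSpanFinrank hb (fun a a' h => by simpa [SPIDIndex.gW] using h)).trans
      (by simp)
  · -- frW'
    exact (auxSpanFinrank hb (fun a a' h => by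
      simpa [SPIDIndex.gW', Fin.castLE_inj] using h)).trans (by simp)
  · -- frE
    exact (auxSpanFinrank hb (fun a a' h => by simpa [SPIDIndex.gE] using h)).trans
      (by simp)
  · -- frX1
    rw [auxFinrankSup (auxSpanDisjoint hb _ _
      (fun x y => by simp [SPIDIndex.gA, SPIDIndex.gO])),
      auxSpanFinrank hb (fun a a' h => by simpa [SPIDIndex.gA] using h),
      auxSpanFinrank hb (fun a a' (h : SPIDIndex.gO a = SPIDIndex.gO a') =>
        Subsingleton.elim a a')]
    simp only [Fintype.card_fin, Fintype.card_unit]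
    omega
  · -- frX2
    rw [auxFinrankSup (auxSpanDisjoint hb _ _
      (fun x y => by simp [SPIDIndex.gB, SPIDIndex.gO])),
      auxSpanFinrank hb (fun a a' h => by simpa [SPIDIndex.gB] using h),
      auxSpanFinrank hb (fun a a' (h : SPIDIndex.gO a = SPIDIndex.gO a') =>
        Subsingleton.elim a a')]
    simp only [Fintype.card_fin, Fintype.card_unit]
    omega
  · -- frL0
    exact (auxSpanFinrank hb (fun a a' (h : SPIDIndex.gO a = SPIDIndex.gO a') =>
      Subsingleton.elim a a')).trans (by simp)
  · -- frLf
    exact fun h => finrank_span_singleton (hune (g h))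
  · -- frM
    exact fun j => (auxSpanFinrank hb (fun a a' h => by
      simpa [SPIDIndex.gM] using h)).trans (by simp)
  · -- dWE
    exact auxSpanDisjoint hb _ _ (fun x y => by simp [SPIDIndex.gW, SPIDIndex.gE])
  · -- dVpR
    exact auxSpanDisjoint hb _ _ (fun x y => by simp [SPIDIndex.gVp, SPIDIndex.gR])
  · -- hX1X2
    rw [auxFactor (auxSpanLe (g := SPIDIndex.gA) (g' := SPIDIndex.gAB) b
        (fun x => ⟨Sum.inl x, rfl⟩))
      (auxSpanLe (g := SPIDIndex.gB) (g' := SPIDIndex.gAB) b (fun x => ⟨Sum.inr x, rfl⟩))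
      (le_refl (Submodule.span F (Set.range (b ∘ SPIDIndex.gO))))
      (le_refl (Submodule.span F (Set.range (b ∘ SPIDIndex.gO))))
      (auxSpanDisjoint hb SPIDIndex.gAB SPIDIndex.gO
        (fun x y => by simp [SPIDIndex.gAB, SPIDIndex.gO])),
      disjoint_iff.mp (auxSpanDisjoint hb _ _
        (fun x y => by simp [SPIDIndex.gA, SPIDIndex.gB])),
      inf_idem, bot_sup_eq]
  · -- dLf
    exact fun h h' hne => hLinf _ _ (fun hc => hne (g.injective hc))
  · -- dX1M
    intro j
    refine disjoint_iff.mp (Disjoint.mono_left ?_ (auxSpanDisjoint hb SPIDIndex.gX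
      (SPIDIndex.gM j) (fun x y => by simp [SPIDIndex.gX, SPIDIndex.gM])))
    exact sup_le (auxSpanLe b (fun x => ⟨Sum.inl (Sum.inl x), rfl⟩))
      (auxSpanLe b (fun x => ⟨Sum.inr (), rfl⟩))
  · -- dX2M
    intro j
    refine disjoint_iff.mp (Disjoint.mono_left ?_ (auxSpanDisjoint hb SPIDIndex.gX
      (SPIDIndex.gM j) (fun x y => by simp [SPIDIndex.gX, SPIDIndex.gM])))
    exact sup_le (auxSpanLe b (fun x => ⟨Sum.inl (Sum.inr x), rfl⟩))
      (auxSpanLe b (fun x => ⟨Sum.inr (), rfl⟩))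
  · -- dMM
    intro j j' hne
    refine disjoint_iff.mp (auxSpanDisjoint hb _ _ (fun x y => ?_))
    simp only [SPIDIndex.gM, ne_eq, Sum.inr.injEq, Prod.mk.injEq, not_and]
    intro h1
    exact absurd h1 hne
  · -- frTot
    have hsub : ∀ {J : Type} (gg : J → SPIDIndex (k - t) (t - 2) (t - 1) (n - 2)),
        Submodule.span F (Set.range (b ∘ gg)) ≤ Submodule.span F (Set.range b) :=
      fun gg => auxSpanLe b (fun x => ⟨gg x, rfl⟩)
    have hall : Submodule.span F (Set.range (b ∘ SPIDIndex.gVp)) ⊔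
        ((Submodule.span F (Set.range (b ∘ SPIDIndex.gA)) ⊔
          Submodule.span F (Set.range (b ∘ SPIDIndex.gO))) ⊔
         (Submodule.span F (Set.range (b ∘ SPIDIndex.gB)) ⊔
          Submodule.span F (Set.range (b ∘ SPIDIndex.gO)))) ⊔
        (⨆ j, Submodule.span F (Set.range (b ∘ SPIDIndex.gM j))) =
        Submodule.span F (Set.range b) := by
      apply le_antisymm
      · exact sup_le (sup_le (hsub _) (sup_le (sup_le (hsub _) (hsub _))
          (sup_le (hsub _) (hsub _)))) (iSup_le fun j => hsub _)
      · apply Submodule.span_le.mpr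
        rintro v ⟨x, rfl⟩
        rcases x with y | (((a | a2) | uu) | ⟨j, i⟩)
        · exact Submodule.mem_sup_left (Submodule.mem_sup_left
            (Submodule.subset_span ⟨y, rfl⟩))
        · exact Submodule.mem_sup_left (Submodule.mem_sup_right
            (Submodule.mem_sup_left (Submodule.mem_sup_left
              (Submodule.subset_span ⟨a, rfl⟩))))
        · exact Submodule.mem_sup_left (Submodule.mem_sup_right
            (Submodule.mem_sup_right (Submodule.mem_sup_left
              (Submodule.subset_span ⟨a2, rfl⟩))))
        · exact Submodule.mem_sup_left (Submodule.mem_sup_right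
            (Submodule.mem_sup_left (Submodule.mem_sup_right
              (Submodule.subset_span ⟨uu, rfl⟩))))
        · exact Submodule.mem_sup_right (Submodule.mem_iSup_of_mem j
            (Submodule.subset_span ⟨i, rfl⟩))
    rw [hall, finrank_span_eq_card hb, hcard]
end

section
/- Let k, t be integers with 2 ≤ t ≤ k−1 and let S = {π1, …, πn} (n ≥ 4) be a (k; k−t, k−t+1)-SPID in a finite-dimensional vector space V over a field which is not a (k−t)-junta, with dim⟨S⟩ = k + (n−1)(t−1) + 1, ordered so that δ(S) = (k, t, t−1, …, t−1), and such that S contains no (k−t)-sunflower of maximal dimension with at least three petals. Then for all 3 ≤ i < j ≤ n one has π_i ∩ π_j ⊆ ⟨π1, π2⟩, and dim(π_i ∩ ⟨π1, π2⟩) = k − t + 1 for all 3 ≤ i ≤ n; moreover, if π_i and π_j (3 ≤ i < j ≤ n) satisfy π_i ∩ ⟨π1, π2⟩ ≠ π_j ∩ ⟨π1, π2⟩, then dim((π_i ∩ ⟨π1, π2⟩) ∩ (π_j ∩ ⟨π1, π2⟩)) = k − t. -/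
set_option maxHeartbeats 1000000
set_option linter.unusedVariables false
set_option linter.unusedSectionVars false


open Module

variable {F : Type*} [Field F] {V : Type*} [AddCommGroup V] [Module F V]
  [FiniteDimensional F V]

section AuxSpid

variable {n : ℕ} (π : Fin n → Submodule F V)

lemma pspan_zero' : pspan π 0 = ⊥ := by
  simp [pspan]

lemma le_pspan' (i : Fin n) {j : ℕ} (hi : (i : ℕ) < j) : π i ≤ pspan π j :=
  le_iSup₂ (f := fun (i : Fin n) (_ : (i : ℕ) < j) => π i) i hi

lemma pspan_mono' {a b : ℕ} (h : a ≤ b) : pspan π a ≤ pspan π b := by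
  refine iSup₂_le fun i hi => le_pspan' π i (lt_of_lt_of_le hi h)

lemma pspan_succ' {j : ℕ} (hj : j < n) :
    pspan π (j + 1) = pspan π j ⊔ π ⟨j, hj⟩ := by
  refine le_antisymm (iSup₂_le fun i hi => ?_)
    (sup_le (pspan_mono' π (Nat.le_succ j)) (le_pspan' π ⟨j, hj⟩ (Nat.lt_succ_self j)))
  rcases lt_or_eq_of_le (Nat.lt_succ_iff.mp hi) with h | h
  · exact le_trans (le_pspan' π i h) le_sup_left
  · have : i = ⟨j, hj⟩ := Fin.ext h
    rw [this]; exact le_sup_right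

end AuxSpid

/-- Inside the proof of Lemma 3.2: pairwise intersections of the later members lie in
`⟨π_1, π_2⟩`, each later member meets `⟨π_1, π_2⟩` in dimension `k - t + 1`, and two
later members meeting `⟨π_1, π_2⟩` in different `(k-t+1)`-spaces have those spaces
intersecting in dimension `k - t`. -/
theorem statement18 {n k t : ℕ} (ht2 : 2 ≤ t) (htk : t + 1 ≤ k) (hn : 4 ≤ n)
    (π : Fin n → Submodule F V) (hS : IsSPID k {k - t, k - t + 1} π)
    (hjunta : ¬ IsJunta (k - t) π)
    (hspan : finrank F ↥(⨆ i, π i) = k + (n - 1) * (t - 1) + 1)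
    (hd1 : delta π 1 = k) (hd2 : delta π 2 = t)
    (hd : ∀ j, 3 ≤ j → j ≤ n → delta π j = t - 1)
    (hnosun : ¬ ∃ p, 3 ≤ p ∧ HasMaxSunflower k (k - t) p (Set.range π)) :
    (∀ i j : Fin n, 2 ≤ (i : ℕ) → (i : ℕ) < (j : ℕ) →
      π i ⊓ π j ≤ π ⟨0, by omega⟩ ⊔ π ⟨1, by omega⟩) ∧
    (∀ i : Fin n, 2 ≤ (i : ℕ) →
      finrank F ↥(π i ⊓ (π ⟨0, by omega⟩ ⊔ π ⟨1, by omega⟩)) = k - t + 1) ∧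
    (∀ i j : Fin n, 2 ≤ (i : ℕ) → (i : ℕ) < (j : ℕ) →
      π i ⊓ (π ⟨0, by omega⟩ ⊔ π ⟨1, by omega⟩) ≠
        π j ⊓ (π ⟨0, by omega⟩ ⊔ π ⟨1, by omega⟩) →
      finrank F ↥((π i ⊓ (π ⟨0, by omega⟩ ⊔ π ⟨1, by omega⟩)) ⊓
        (π j ⊓ (π ⟨0, by omega⟩ ⊔ π ⟨1, by omega⟩))) = k - t) := by
  classical
  obtain ⟨hinj, hdim, hL, -⟩ := hS
  set z : Fin n := ⟨0, by omega⟩ with hz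
  set o : Fin n := ⟨1, by omega⟩ with ho
  set Sg : Submodule F V := π z ⊔ π o with hSg
  -- intersection dimensions
  have hint : ∀ i j : Fin n, i ≠ j →
      finrank F ↥(π i ⊓ π j) = k - t ∨ finrank F ↥(π i ⊓ π j) = k - t + 1 := by
    intro i j hij
    have := hL i j hij
    simpa [Set.mem_insert_iff] using this
  have hintge : ∀ i j : Fin n, i ≠ j → k - t ≤ finrank F ↥(π i ⊓ π j) := by
    intro i j hij
    rcases hint i j hij with h | h <;> omega
  -- dimension of pspan π 1
  have hW1 : finrank F ↥(pspan π 1) = k := by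
    have h := hd1
    unfold delta at h
    rw [show (1 : ℕ) - 1 = 0 from rfl, pspan_zero'] at h
    simpa using h
  -- pspan π 2 = Sg
  have hW1eq : pspan π 1 = π z := by
    have h := pspan_succ' π (show 0 < n by omega)
    norm_num at h
    rw [h, pspan_zero', bot_sup_eq]
  have hW2eq : pspan π 2 = Sg := by
    have h := pspan_succ' π (show 1 < n by omega)
    norm_num at h
    rw [h, hW1eq, hSg]
  have hW2 : finrank F ↥(pspan π 2) = k + t := by
    have h := hd2
    unfold delta at h
    rw [show (2 : ℕ) - 1 = 1 from rfl] at h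
    have hm : finrank F ↥(pspan π 1) ≤ finrank F ↥(pspan π 2) :=
      Submodule.finrank_mono (pspan_mono' π (by omega))
    omega
  have hSdim : finrank F ↥Sg = k + t := by rw [← hW2eq]; exact hW2
  -- dimensions of all pspans
  have hWj : ∀ j, 2 ≤ j → j ≤ n → finrank F ↥(pspan π j) = k + t + (j - 2) * (t - 1) := by
    intro j hj2
    induction j, hj2 using Nat.le_induction with
    | base => intro _; simpa using hW2
    | succ j hj ih =>
      intro hjn
      have hdj := hd (j + 1) (by omega) hjn
      unfold delta at hdj
      rw [show j + 1 - 1 = j from rfl] at hdj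
      have hprev := ih (by omega)
      have hm : finrank F ↥(pspan π j) ≤ finrank F ↥(pspan π (j + 1)) :=
        Submodule.finrank_mono (pspan_mono' π (by omega))
      have hmul : (j + 1 - 2) * (t - 1) = (j - 2) * (t - 1) + (t - 1) := by
        rw [show j + 1 - 2 = (j - 2) + 1 from by omega, Nat.succ_mul]
      rw [hmul]
      set a := (j - 2) * (t - 1)
      omega
  -- dimension of τ_r = π r ⊓ pspan π r
  have hτdim : ∀ (r : ℕ) (h2 : 2 ≤ r) (hrn : r < n),
      finrank F ↥(π ⟨r, hrn⟩ ⊓ pspan π r) = k - t + 1 := by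
    intro r h2 hrn
    have hsup := Submodule.finrank_sup_add_finrank_inf_eq (π ⟨r, hrn⟩) (pspan π r)
    have hps : π ⟨r, hrn⟩ ⊔ pspan π r = pspan π (r + 1) := by
      rw [pspan_succ' π hrn]; exact sup_comm _ _
    rw [hps] at hsup
    have e1 := hWj r h2 (le_of_lt hrn)
    have e2 := hWj (r + 1) (by omega) hrn
    have hmul : (r + 1 - 2) * (t - 1) = (r - 2) * (t - 1) + (t - 1) := by
      rw [show r + 1 - 2 = (r - 2) + 1 from by omega, Nat.succ_mul]
    rw [hmul] at e2
    have hdr := hdim ⟨r, hrn⟩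
    set a := (r - 2) * (t - 1)
    omega
  -- Sg is contained in all pspans from index 2 on
  have hSle : ∀ r : ℕ, 2 ≤ r → Sg ≤ pspan π r := by
    intro r h2
    exact sup_le (le_pspan' π z (by simp [hz]; omega)) (le_pspan' π o (by simp [ho]; omega))
  -- dim (π z ⊓ π o) = k - t
  have h01 : finrank F ↥(π z ⊓ π o) = k - t := by
    have hsup := Submodule.finrank_sup_add_finrank_inf_eq (π z) (π o)
    rw [← hSg] at hsup
    have h1 := hdim z
    have h2 := hdim o
    omega
  -- key claim: τ_r ≤ Sg (else we get a maximal 3-petal sunflower)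
  have hkey : ∀ (r : ℕ) (h2 : 2 ≤ r) (hrn : r < n), π ⟨r, hrn⟩ ⊓ pspan π r ≤ Sg := by
    intro r h2 hrn
    by_contra hcon
    set ρ : Fin n := ⟨r, hrn⟩ with hρ
    set τ : Submodule F V := π ρ ⊓ pspan π r with hτ
    have hτd : finrank F ↥τ = k - t + 1 := hτdim r h2 hrn
    have hρz : ρ ≠ z := by simp [hρ, hz, Fin.ext_iff]; omega
    have hρo : ρ ≠ o := by simp [hρ, ho, Fin.ext_iff]; omega
    have hzo : z ≠ o := by simp [hz, ho, Fin.ext_iff]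
    have hle1 : π ρ ⊓ π z ≤ τ ⊓ Sg := by
      refine le_inf (le_inf inf_le_left ?_) (le_trans inf_le_right le_sup_left)
      exact le_trans inf_le_right (le_pspan' π z (by simp [hz]; omega))
    have hle2 : π ρ ⊓ π o ≤ τ ⊓ Sg := by
      refine le_inf (le_inf inf_le_left ?_) (le_trans inf_le_right le_sup_right)
      exact le_trans inf_le_right (le_pspan' π o (by simp [ho]; omega))
    have hfm : finrank F ↥(τ ⊓ Sg) ≤ k - t + 1 := by
      rw [← hτd]; exact Submodule.finrank_mono inf_le_left
    have hne' : finrank F ↥(τ ⊓ Sg) ≠ k - t + 1 := by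
      intro h
      apply hcon
      have : τ ⊓ Sg = τ :=
        Submodule.eq_of_le_of_finrank_le inf_le_left (by rw [h, hτd])
      exact inf_eq_left.mp this
    have hdz := hintge ρ z hρz
    have hdo := hintge ρ o hρo
    have hm1 := Submodule.finrank_mono hle1
    have hts : finrank F ↥(τ ⊓ Sg) = k - t := by omega
    have hez : π ρ ⊓ π z = τ ⊓ Sg :=
      Submodule.eq_of_le_of_finrank_le hle1 (by omega)
    have heo : π ρ ⊓ π o = τ ⊓ Sg :=
      Submodule.eq_of_le_of_finrank_le hle2 (by omega)
    have hCz : τ ⊓ Sg ≤ π z := by rw [← hez]; exact inf_le_right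
    have hCo : τ ⊓ Sg ≤ π o := by rw [← heo]; exact inf_le_right
    have hezo : π z ⊓ π o = τ ⊓ Sg :=
      (Submodule.eq_of_le_of_finrank_le (le_inf hCz hCo) (by omega)).symm
    -- the three spaces span k + 2t
    have htS : τ ⊓ Sg = π ρ ⊓ Sg := by
      rw [hτ, inf_assoc, inf_eq_right.mpr (hSle r h2)]
    have hSp : finrank F ↥(Sg ⊓ π ρ) = k - t := by
      rw [inf_comm, ← htS, hts]
    have hspan3 : finrank F ↥(π z ⊔ π o ⊔ π ρ) = k + 2 * t := by
      have hsup := Submodule.finrank_sup_add_finrank_inf_eq Sg (π ρ)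
      rw [hSp] at hsup
      have := hdim ρ
      rw [← hSg]
      omega
    -- build the sunflower
    apply hnosun
    refine ⟨3, le_refl 3, {π z, π o, π ρ}, ?_, ?_, τ ⊓ Sg, hts, ?_, ?_⟩
    · intro W hW
      simp only [Finset.coe_insert, Finset.coe_singleton, Set.mem_insert_iff,
        Set.mem_singleton_iff] at hW
      rcases hW with h | h | h <;> exact ⟨_, h.symm⟩
    · rw [Finset.card_insert_of_notMem (by simp [hinj.ne hzo, hinj.ne (Ne.symm hρz)]),
        Finset.card_insert_of_notMem (by simp [hinj.ne (Ne.symm hρo)]),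
        Finset.card_singleton]
    · intro W hW W' hW' hWW'
      simp only [Finset.mem_insert, Finset.mem_singleton] at hW hW'
      rcases hW with h | h | h <;> rcases hW' with h' | h' | h' <;> subst h <;> subst h'
      · exact absurd rfl hWW'
      · exact hezo
      · rw [inf_comm]; exact hez
      · rw [inf_comm]; exact hezo
      · exact absurd rfl hWW'
      · rw [inf_comm]; exact heo
      · exact hez
      · exact heo
      · exact absurd rfl hWW'
    · have hA : ({π z, π o, π ρ} : Finset (Submodule F V)).sup id = π z ⊔ π o ⊔ π ρ := by
        simp [Finset.sup_insert, Finset.sup_singleton, sup_assoc]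
      rw [hA, hspan3]
      have h1 : k - (k - t) = t := by omega
      rw [h1]
      omega
  -- π i ⊓ Sg = π i ⊓ pspan π i for i ≥ 2
  have hiS : ∀ i : Fin n, 2 ≤ (i : ℕ) → π i ⊓ Sg = π i ⊓ pspan π (i : ℕ) := by
    intro i h2
    refine le_antisymm (inf_le_inf_left _ (hSle _ h2)) (le_inf inf_le_left ?_)
    have := hkey (i : ℕ) h2 i.isLt
    simpa using this
  have hiSdim : ∀ i : Fin n, 2 ≤ (i : ℕ) → finrank F ↥(π i ⊓ Sg) = k - t + 1 := by
    intro i h2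
    rw [hiS i h2]
    have := hτdim (i : ℕ) h2 i.isLt
    simpa using this
  have hsub : ∀ i j : Fin n, 2 ≤ (i : ℕ) → (i : ℕ) < (j : ℕ) → π i ⊓ π j ≤ Sg := by
    intro i j h2 hij
    have h1 : π i ⊓ π j ≤ π j ⊓ pspan π (j : ℕ) :=
      le_inf inf_le_right (le_trans inf_le_left (le_pspan' π i hij))
    have h3 := hkey (j : ℕ) (by omega) j.isLt
    simp only [Fin.eta] at h3
    exact le_trans h1 h3
  refine ⟨hsub, hiSdim, ?_⟩
  intro i j h2 hij hne
  have hij' : i ≠ j := by intro h; rw [h] at hij; omega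
  have heq : (π i ⊓ Sg) ⊓ (π j ⊓ Sg) = π i ⊓ π j := by
    refine le_antisymm (le_inf (le_trans inf_le_left inf_le_left)
      (le_trans inf_le_right inf_le_left)) ?_
    exact le_inf (le_inf inf_le_left (hsub i j h2 hij))
      (le_inf inf_le_right (hsub i j h2 hij))
  rw [heq]
  rcases hint i j hij' with h | h
  · exact h
  · exfalso
    apply hne
    have hle : π i ⊓ π j ≤ π i ⊓ Sg := le_inf inf_le_left (hsub i j h2 hij)
    have hle' : π i ⊓ π j ≤ π j ⊓ Sg := le_inf inf_le_right (hsub i j h2 hij)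
    have e1 : π i ⊓ π j = π i ⊓ Sg :=
      Submodule.eq_of_le_of_finrank_le hle (by rw [hiSdim i h2, h])
    have e2 : π i ⊓ π j = π j ⊓ Sg :=
      Submodule.eq_of_le_of_finrank_le hle' (by rw [hiSdim j (by omega), h])
    rw [← e1, ← e2]
end

section
/- Let k, t be integers with 2 ≤ t ≤ k−1 and let S be a (k; k−t, k−t+1)-SPID in a finite-dimensional vector space V over a field which is not a (k−t)-junta and contains no (k−t)-sunflower of maximal dimension with at least three petals, with dim⟨S⟩ = k + (n−1)(t−1) + 1 where n = |S| ≥ 3. Suppose π_{j1} = ⟨W_1, M_{j1}⟩, π_{j2} = ⟨W_2, M_{j2}⟩ and π_{jh} = ⟨W_h, M_{jh}⟩ are three elements of S, where W_1, W_2, W_h are pairwise distinct (k−t+1)-dimensional subspaces pairwise intersecting in (k−t)-dimensional subspaces and M_{j1}, M_{j2}, M_{jh} are (t−1)-dimensional subspaces such that W_1, W_2, W_h, M_{j1}, M_{j2}, M_{jh} together span a subspace of dimension dim⟨W_1, W_2, W_h⟩ + 3(t−1). Then W_h ⊆ ⟨W_1, W_2⟩; in particular dim⟨W_1, W_2, W_h⟩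 = k − t + 2. -/
open Module

variable {F : Type*} [Field F] {V : Type*} [AddCommGroup V] [Module F V]
  [FiniteDimensional F V]

private lemma sup_of_hyperplanes {ℓ : ℕ} {W X Y : Submodule F V}
    (hX : X ≤ W) (hY : Y ≤ W) (hW : finrank F ↥W = ℓ + 1)
    (hfX : finrank F ↥X = ℓ) (hfY : finrank F ↥Y = ℓ) (hne : X ≠ Y) :
    X ⊔ Y = W := by
  have h := Submodule.finrank_sup_add_finrank_inf_eq X Y
  have hXY : X ⊔ Y ≤ W := sup_le hX hY
  have h1 : finrank F ↥(X ⊔ Y) ≤ ℓ + 1 := hW ▸ Submodule.finrank_mono hXY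
  by_cases hc : finrank F ↥(X ⊓ Y) = ℓ
  · exfalso
    have hXi : X ⊓ Y = X := Submodule.eq_of_le_of_finrank_le inf_le_left (by omega)
    have hXle : X ≤ Y := by rw [← hXi]; exact inf_le_right
    exact hne (Submodule.eq_of_le_of_finrank_le hXle (by omega))
  · have hc2 : finrank F ↥(X ⊓ Y) ≤ ℓ := hfX ▸ Submodule.finrank_mono inf_le_left
    exact Submodule.eq_of_le_of_finrank_le hXY (by omega)

private lemma inf_eq_center {k ℓ t : ℕ} (hk : ℓ + t = k)
    (pa pb pc C : Submodule F V)
    (hpa : finrank F ↥pa = k) (hpb : finrank F ↥pb = k) (hpc : finrank F ↥pc = k)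
    (hC : finrank F ↥C = ℓ)
    (hCa : C ≤ pa) (hCb : C ≤ pb) (hCc : C ≤ pc)
    (hT : finrank F ↥(pa ⊔ pb ⊔ pc) = ℓ + 3 * t) :
    pa ⊓ pb = C := by
  have h1 := Submodule.finrank_sup_add_finrank_inf_eq pa pb
  have h2 := Submodule.finrank_sup_add_finrank_inf_eq (pa ⊔ pb) pc
  have hCab : C ≤ pa ⊓ pb := le_inf hCa hCb
  have g1 : ℓ ≤ finrank F ↥(pa ⊓ pb) := hC ▸ Submodule.finrank_mono hCab
  have g2 : ℓ ≤ finrank F ↥((pa ⊔ pb) ⊓ pc) :=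
    hC ▸ Submodule.finrank_mono (le_inf (hCa.trans le_sup_left) hCc)
  exact (Submodule.eq_of_le_of_finrank_le hCab (by omega)).symm

set_option maxHeartbeats 1000000 in
/-- Inside the proof of Lemma 3.2 (equations (10)/(11)): for three members
`π_{j₁} = ⟨W₁, M_{j₁}⟩`, `π_{j₂} = ⟨W₂, M_{j₂}⟩`, `π_{j_h} = ⟨W_h, M_{j_h}⟩` as in the
statement, one has `W_h ⊆ ⟨W₁, W₂⟩`, so `dim⟨W₁, W₂, W_h⟩ = k - t + 2`. -/
theorem statement19 {n k t : ℕ} (ht2 : 2 ≤ t) (htk : t + 1 ≤ k) (hn : 3 ≤ n)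
    (π : Fin n → Submodule F V) (hS : IsSPID k {k - t, k - t + 1} π)
    (hjunta : ¬ IsJunta (k - t) π)
    (hnosun : ¬ ∃ p, 3 ≤ p ∧ HasMaxSunflower k (k - t) p (Set.range π))
    (hspan : finrank F ↥(⨆ i, π i) = k + (n - 1) * (t - 1) + 1)
    (j1 j2 jh : Fin n) (h12 : j1 ≠ j2) (h1h : j1 ≠ jh) (h2h : j2 ≠ jh)
    (W1 W2 Wh M1 M2 Mh : Submodule F V)
    (hp1 : π j1 = W1 ⊔ M1) (hp2 : π j2 = W2 ⊔ M2) (hph : π jh = Wh ⊔ Mh)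
    (hW1 : finrank F ↥W1 = k - t + 1) (hW2 : finrank F ↥W2 = k - t + 1)
    (hWh : finrank F ↥Wh = k - t + 1)
    (hd12 : W1 ≠ W2) (hd1h : W1 ≠ Wh) (hd2h : W2 ≠ Wh)
    (hi12 : finrank F ↥(W1 ⊓ W2) = k - t) (hi1h : finrank F ↥(W1 ⊓ Wh) = k - t)
    (hi2h : finrank F ↥(W2 ⊓ Wh) = k - t)
    (hM1 : finrank F ↥M1 = t - 1) (hM2 : finrank F ↥M2 = t - 1)
    (hMh : finrank F ↥Mh = t - 1)
    (hindep : finrank F ↥(W1 ⊔ W2 ⊔ Wh ⊔ M1 ⊔ M2 ⊔ Mh) =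
      finrank F ↥(W1 ⊔ W2 ⊔ Wh) + 3 * (t - 1)) :
    Wh ≤ W1 ⊔ W2 ∧ finrank F ↥(W1 ⊔ W2 ⊔ Wh) = k - t + 2 := by
  classical
  obtain ⟨hinj, hdim, -, -⟩ := hS
  have htk' : t ≤ k := by omega
  have hk : (k - t) + t = k := by omega
  have hℓ1 : 1 ≤ (k - t) := by omega
  have hsup12 : finrank F ↥(W1 ⊔ W2) = (k - t) + 2 := by
    have := Submodule.finrank_sup_add_finrank_inf_eq W1 W2; omega
  have hsup1h : finrank F ↥(W1 ⊔ Wh) = (k - t) + 2 := by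
    have := Submodule.finrank_sup_add_finrank_inf_eq W1 Wh; omega
  have hsup2h : finrank F ↥(W2 ⊔ Wh) = (k - t) + 2 := by
    have := Submodule.finrank_sup_add_finrank_inf_eq W2 Wh; omega
  have hkey := Submodule.finrank_sup_add_finrank_inf_eq (W1 ⊔ W2) Wh
  have hge : (k - t) ≤ finrank F ↥((W1 ⊔ W2) ⊓ Wh) := by
    calc (k - t) = finrank F ↥(W1 ⊓ Wh) := hi1h.symm
    _ ≤ _ := Submodule.finrank_mono (inf_le_inf le_sup_left le_rfl)
  have hle : finrank F ↥((W1 ⊔ W2) ⊓ Wh) ≤ (k - t) + 1 :=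
    hWh ▸ Submodule.finrank_mono inf_le_right
  by_cases hcase : finrank F ↥((W1 ⊔ W2) ⊓ Wh) = (k - t) + 1
  · have heq : (W1 ⊔ W2) ⊓ Wh = Wh :=
      Submodule.eq_of_le_of_finrank_le inf_le_right (by omega)
    have hWhle : Wh ≤ W1 ⊔ W2 := by rw [← heq]; exact inf_le_left
    exact ⟨hWhle, by omega⟩
  · exfalso
    have hd : finrank F ↥(W1 ⊔ W2 ⊔ Wh) = (k - t) + 3 := by omega
    -- all three pairwise intersections coincide
    have hC1h : W1 ⊓ W2 = W1 ⊓ Wh := by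
      by_contra hne
      have hs := sup_of_hyperplanes inf_le_left inf_le_left hW1 hi12 hi1h hne
      have h1 : W1 ≤ W2 ⊔ Wh := by
        rw [← hs]
        exact sup_le (inf_le_right.trans le_sup_left) (inf_le_right.trans le_sup_right)
      have h2 : W1 ⊔ W2 ⊔ Wh ≤ W2 ⊔ Wh := sup_le (sup_le h1 le_sup_left) le_sup_right
      have := Submodule.finrank_mono h2
      omega
    have hC2h : W1 ⊓ W2 = W2 ⊓ Wh := by
      by_contra hne
      have hs := sup_of_hyperplanes inf_le_right inf_le_left hW2 hi12 hi2h hne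
      have h1 : W2 ≤ W1 ⊔ Wh := by
        rw [← hs]
        exact sup_le (inf_le_left.trans le_sup_left) (inf_le_right.trans le_sup_right)
      have h2 : W1 ⊔ W2 ⊔ Wh ≤ W1 ⊔ Wh := sup_le (sup_le le_sup_left h1) le_sup_right
      have := Submodule.finrank_mono h2
      omega
    have hC : finrank F ↥(W1 ⊓ W2) = (k - t) := hi12
    have hCW1 : (W1 ⊓ W2) ≤ W1 := inf_le_left
    have hCW2 : (W1 ⊓ W2) ≤ W2 := inf_le_right
    have hCWh : (W1 ⊓ W2) ≤ Wh := by rw [hC1h]; exact inf_le_right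
    have hC1 : (W1 ⊓ W2) ≤ π j1 := by rw [hp1]; exact hCW1.trans le_sup_left
    have hC2 : (W1 ⊓ W2) ≤ π j2 := by rw [hp2]; exact hCW2.trans le_sup_left
    have hCh : (W1 ⊓ W2) ≤ π jh := by rw [hph]; exact hCWh.trans le_sup_left
    have hTsup : π j1 ⊔ π j2 ⊔ π jh = W1 ⊔ W2 ⊔ Wh ⊔ M1 ⊔ M2 ⊔ Mh := by
      rw [hp1, hp2, hph]
      apply le_antisymm
      · refine sup_le (sup_le (sup_le ?_ ?_) (sup_le ?_ ?_)) (sup_le ?_ ?_)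
        · exact le_sup_of_le_left (le_sup_of_le_left (le_sup_of_le_left
            (le_sup_of_le_left le_sup_left)))
        · exact le_sup_of_le_left (le_sup_of_le_left le_sup_right)
        · exact le_sup_of_le_left (le_sup_of_le_left (le_sup_of_le_left
            (le_sup_of_le_left le_sup_right)))
        · exact le_sup_of_le_left le_sup_right
        · exact le_sup_of_le_left (le_sup_of_le_left (le_sup_of_le_left le_sup_right))
        · exact le_sup_right
      · refine sup_le (sup_le (sup_le (sup_le (sup_le ?_ ?_) ?_) ?_) ?_) ?_
        · exact le_sup_of_le_left (le_sup_of_le_left le_sup_left)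
        · exact le_sup_of_le_left (le_sup_of_le_right le_sup_left)
        · exact le_sup_of_le_right le_sup_left
        · exact le_sup_of_le_left (le_sup_of_le_left le_sup_right)
        · exact le_sup_of_le_left (le_sup_of_le_right le_sup_right)
        · exact le_sup_of_le_right le_sup_right
    have hT : finrank F ↥(π j1 ⊔ π j2 ⊔ π jh) = (k - t) + 3 * t := by
      rw [hTsup]; omega
    have hT1 : finrank F ↥(π j1 ⊔ π jh ⊔ π j2) = (k - t) + 3 * t := by
      rw [sup_right_comm]; exact hT
    have hT2 : finrank F ↥(π j2 ⊔ π jh ⊔ π j1) = (k - t) + 3 * t := by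
      rw [sup_right_comm, sup_comm (π j2) (π j1)]; exact hT
    have e12 : π j1 ⊓ π j2 = (W1 ⊓ W2) :=
      inf_eq_center hk _ _ (π jh) (W1 ⊓ W2) (hdim j1) (hdim j2) (hdim jh) hC hC1 hC2 hCh hT
    have e1h : π j1 ⊓ π jh = (W1 ⊓ W2) :=
      inf_eq_center hk _ _ (π j2) (W1 ⊓ W2) (hdim j1) (hdim jh) (hdim j2) hC hC1 hCh hC2 hT1
    have e2h : π j2 ⊓ π jh = (W1 ⊓ W2) :=
      inf_eq_center hk _ _ (π j1) (W1 ⊓ W2) (hdim j2) (hdim jh) (hdim j1) hC hC2 hCh hC1 hT2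
    have hne12 : π j1 ≠ π j2 := fun h => h12 (hinj h)
    have hne1h : π j1 ≠ π jh := fun h => h1h (hinj h)
    have hne2h : π j2 ≠ π jh := fun h => h2h (hinj h)
    apply hnosun
    refine ⟨3, le_rfl, {π j1, π j2, π jh}, ?_, ?_, (W1 ⊓ W2), hC, ?_, ?_⟩
    · intro x hx
      simp only [Finset.coe_insert, Finset.coe_singleton, Set.mem_insert_iff,
        Set.mem_singleton_iff] at hx
      rcases hx with rfl | rfl | rfl
      exacts [⟨j1, rfl⟩, ⟨j2, rfl⟩, ⟨jh, rfl⟩]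
    · rw [Finset.card_insert_of_notMem (by simp [hne12, hne1h]),
        Finset.card_insert_of_notMem (by simp [hne2h]), Finset.card_singleton]
    · intro W hW W' hW' hne
      simp only [Finset.mem_insert, Finset.mem_singleton] at hW hW'
      rcases hW with rfl | rfl | rfl <;> rcases hW' with rfl | rfl | rfl <;>
        first
          | exact absurd rfl hne
          | exact e12
          | exact e1h
          | exact e2h
          | (rw [inf_comm]; first | exact e12 | exact e1h | exact e2h)
    · have hsup : ({π j1, π j2, π jh} : Finset (Submodule F V)).sup id
          = π j1 ⊔ π j2 ⊔ π jh := by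
        simp [Finset.sup_insert, Finset.sup_singleton, sup_assoc]
      rw [hsup, hT]
      omega
end
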